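/- Let 2 <= p <= q and n >= 1. The number of (n+1)-tuples (M, x^1, ..., x^n) with M a word of length t over an alphabet of size q and each x^j a subsequence of M is at least (q + 1 - p)^t · (F_p(0) + ... + F_p(t))^n and at most q^t · (F_q(0) + ... + F_q(t))^n. -/

import Mathlib

open List Finset

/-- The `q`-bonacci numbers: `F_q(0)=1`, `F_q(t)=2^(t-1)` for `1 ≤ t ≤ q`,
and `F_q(t)` is the sum of the previous `q` terms for `t > q`. -/
def qbonacci (q : ℕ) : ℕ → ℕ
  | 0 => 1
  | t + 1 =>
    if t + 1 ≤ q then 2 ^ t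
    else ∑ i ∈ Finset.range q, qbonacci q (t - i)
  decreasing_by exact Nat.lt_succ_of_le (Nat.sub_le t i)

/-- The length-`t` word cycling through the alphabet `{0, 1, ..., q-1}`. -/
def cyc (q t : ℕ) : List ℕ := (List.range t).map (· % q)

/-- The alternating binary word `0,1,0,1,...` of length `t` (A=0, C=1). -/
def alt (t : ℕ) : List ℕ := (List.range t).map (· % 2)

/-- `tau q x` is the least `s` such that `x` is a subsequence of `cyc q s`. -/
noncomputable def tau (q : ℕ) (x : List ℕ) : ℕ := sInf {s | x <+ cyc q s}

/-!
Grouping the tuples by `M`, their number is `∑_{|M| = t} D(M)^n`, where `D(M)` counts the distinct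
subsequences of `M`. Appending a letter `b` to `w` gives `D(wb) = 2 D(w) - E_b(w)`, where `E_b(w)`,
the number of distinct subsequences ending in `b`, is at most `D` of the prefix before the last
occurrence of `b`. The last occurrences of the `q` letters sit at distinct positions, which yields
`D(w) ≤ F_q(0) + ⋯ + F_q(|w|)`. If instead every letter of `w` differs from the `p - 1` letters
before it, each increment `D(wb) - D(w) ≥ D(w) - D(w.take (|w| - p))` is at least the sum of the
`p` previous increments, so the `s`-th increment is at least `F_p(s)` and
`D(w) ≥ F_p(0) + ⋯ + F_p(|w|)`. There are at least `(q + 1 - p)^t` such words of length `t`.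
-/

lemma qbonacci_zero (q : ℕ) : qbonacci q 0 = 1 := by rw [qbonacci]

lemma qbonacci_succ_of_le {q t : ℕ} (h : t + 1 ≤ q) : qbonacci q (t + 1) = 2 ^ t := by
  rw [qbonacci, if_pos h]

lemma qbonacci_succ_of_lt {q t : ℕ} (h : q < t + 1) :
    qbonacci q (t + 1) = ∑ i ∈ Finset.range q, qbonacci q (t - i) := by
  rw [qbonacci, if_neg (by omega)]

def qbonacciSum (q t : ℕ) : ℕ := ∑ i ∈ Finset.range (t + 1), qbonacci q i

lemma qbonacciSum_zero (q : ℕ) : qbonacciSum q 0 = 1 := by simp [qbonacciSum, qbonacci_zero]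

lemma qbonacciSum_succ (q t : ℕ) : qbonacciSum q (t + 1) = qbonacciSum q t + qbonacci q (t + 1) :=
  Finset.sum_range_succ _ _

lemma qbonacciSum_mono (q : ℕ) : Monotone (qbonacciSum q) := fun _ _ hab =>
  sum_le_sum_of_subset (range_subset_range.2 (by omega))

lemma qbonacciSum_of_le {q t : ℕ} (h : t ≤ q) : qbonacciSum q t = 2 ^ t := by
  induction t with
  | zero => simp [qbonacciSum_zero]
  | succ t ih => rw [qbonacciSum_succ, ih (by omega), qbonacci_succ_of_le h]; ring

lemma qbonacciSum_eq_one_add_sum (q t : ℕ) :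
    qbonacciSum q t = 1 + ∑ i ∈ Finset.range t, qbonacci q (t - i) := by
  rw [qbonacciSum, Finset.sum_range_succ', qbonacci_zero, add_comm, ← sum_range_reflect]
  exact congrArg _ (sum_congr rfl fun i hi => by rw [Finset.mem_range] at hi; congr 1; omega)

lemma qbonacciSum_eq_one_add_sum_min (q t : ℕ) :
    qbonacciSum q t = 1 + ∑ k ∈ Finset.range (min q t), qbonacciSum q (t - 1 - k) := by
  induction t with
  | zero => simp [qbonacciSum_zero]
  | succ t ih =>
    rcases le_or_gt (t + 1) q with h | h
    · rw [min_eq_right h, qbonacciSum_of_le h, ← sum_range_reflect]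
      have hpow : ∀ k ∈ Finset.range (t + 1),
          qbonacciSum q (t + 1 - 1 - (t + 1 - 1 - k)) = 2 ^ k := fun k hk => by
        rw [Finset.mem_range] at hk
        rw [← qbonacciSum_of_le (q := q) (t := k) (by omega)]
        congr 1; omega
      rw [sum_congr rfl hpow, Nat.geomSum_eq le_rfl, Nat.div_one]
      have := Nat.one_le_two_pow (n := t + 1)
      omega
    · have hsplit : ∀ k ∈ Finset.range q,
          qbonacciSum q (t + 1 - 1 - k) = qbonacciSum q (t - 1 - k) + qbonacci q (t - k) :=
        fun k hk => by
          rw [Finset.mem_range] at hk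
          rw [show t + 1 - 1 - k = t - 1 - k + 1 by omega, qbonacciSum_succ]
          congr 2; omega
      rw [min_eq_left (by omega), qbonacciSum_succ, ih, min_eq_left (by omega),
        qbonacci_succ_of_lt h, sum_congr rfl hsplit, sum_add_distrib]
      omega

theorem List.Sublist.dropLast {α : Type*} {l₁ l₂ : List α} (h : l₁ <+ l₂) :
    l₁.dropLast <+ l₂.dropLast := by
  simpa using (List.reverse_sublist.2 h).tail

theorem List.concat_sublist_of_sublist_append {α : Type*} {y u v : List α} {b : α} (hb : b ∉ v)
    (h : y ++ [b] <+ u ++ v) : y ++ [b] <+ u := by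
  obtain ⟨l₁, l₂, heq, h₁, h₂⟩ := List.sublist_append_iff.1 h
  rcases List.eq_nil_or_concat l₂ with rfl | ⟨l, c, rfl⟩
  · simpa [heq] using h₁
  · rw [List.concat_eq_append, ← List.append_assoc] at heq
    obtain rfl : b = c := by simpa using (List.append_inj' heq rfl).2
    exact absurd (h₂.subset (by simp)) hb

section Subsequences

variable {α : Type*} [DecidableEq α]

def subseqCount (w : List α) : ℕ := w.sublists.toFinset.card

def subseqCountEndingIn (b : α) (w : List α) : ℕ :=
  (w.sublists.toFinset.filter (·.getLast? = some b)).card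

lemma subseqCount_nil : subseqCount ([] : List α) = 1 := rfl

lemma subseqCountEndingIn_nil (b : α) : subseqCountEndingIn b ([] : List α) = 0 := rfl

lemma subseqCount_eq_one_add_sum [Fintype α] (w : List α) :
    subseqCount w = 1 + ∑ a, subseqCountEndingIn a w := by
  rw [subseqCount, card_eq_sum_card_fiberwise (f := List.getLast?) (t := univ)
    fun _ _ => mem_univ _, Fintype.sum_option]
  congr 1
  rw [card_eq_one]
  exact ⟨[], by ext x; simp +contextual [List.getLast?_eq_none_iff]⟩

lemma subseqCountEndingIn_eq_card_filter (b : α) (w : List α) :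
    subseqCountEndingIn b w = (w.sublists.toFinset.filter (· ++ [b] <+ w)).card := by
  rw [subseqCountEndingIn, eq_comm, ← card_image_of_injective _ (List.append_left_injective [b])]
  congr 1
  ext x
  simp only [Finset.mem_filter, mem_image, List.mem_toFinset, List.mem_sublists,
    List.getLast?_eq_some_iff]
  constructor
  · rintro ⟨y, ⟨-, hy⟩, rfl⟩
    exact ⟨hy, y, rfl⟩
  · rintro ⟨hx, y, rfl⟩
    exact ⟨y, ⟨(List.sublist_append_left y [b]).trans hx, hx⟩, rfl⟩

lemma subseqCountEndingIn_concat_self (b : α) (w : List α) :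
    subseqCountEndingIn b (w ++ [b]) = subseqCount w := by
  rw [subseqCountEndingIn_eq_card_filter, subseqCount]
  congr 1
  ext y
  simp +contextual [List.mem_sublists]

lemma subseqCountEndingIn_le_dropLast (b : α) (w : List α) :
    subseqCountEndingIn b w ≤ subseqCount w.dropLast := by
  rw [subseqCountEndingIn_eq_card_filter, subseqCount]
  refine card_le_card fun y hy => ?_
  simp only [Finset.mem_filter, List.mem_toFinset, List.mem_sublists] at hy ⊢
  simpa using hy.2.dropLast

lemma subseqCountEndingIn_append_of_notMem {b : α} {v : List α} (hb : b ∉ v) (u : List α) :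
    subseqCountEndingIn b (u ++ v) = subseqCountEndingIn b u := by
  unfold subseqCountEndingIn
  congr 1
  ext x
  simp only [Finset.mem_filter, List.mem_toFinset, List.mem_sublists, and_congr_left_iff,
    List.getLast?_eq_some_iff]
  rintro ⟨y, rfl⟩
  exact ⟨List.concat_sublist_of_sublist_append hb,
    fun h => h.trans (List.sublist_append_left u v)⟩

lemma subseqCountEndingIn_le_take {b : α} {w : List α} {m : ℕ} (hm : m < w.length)
    (hb : b ∉ w.drop (m + 1)) : subseqCountEndingIn b w ≤ subseqCount (w.take m) := by
  calc subseqCountEndingIn b w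
      = subseqCountEndingIn b (w.take (m + 1)) := by
        rw [← subseqCountEndingIn_append_of_notMem hb (w.take (m + 1)), List.take_append_drop]
    _ ≤ subseqCount (w.take (m + 1)).dropLast := subseqCountEndingIn_le_dropLast _ _
    _ = subseqCount (w.take m) := by
        rw [List.take_add_one, List.getElem?_eq_getElem hm, Option.toList_some,
          List.dropLast_concat]

lemma subseqCount_concat_add [Fintype α] (b : α) (w : List α) :
    subseqCount (w ++ [b]) + subseqCountEndingIn b w = 2 * subseqCount w := by
  have hrest : ∑ a ∈ univ.erase b, subseqCountEndingIn a (w ++ [b])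
      = ∑ a ∈ univ.erase b, subseqCountEndingIn a w :=
    sum_congr rfl fun a ha =>
      subseqCountEndingIn_append_of_notMem (by simpa using ne_of_mem_erase ha) w
  rw [subseqCount_eq_one_add_sum (w ++ [b]), subseqCount_eq_one_add_sum w,
    ← add_sum_erase _ _ (mem_univ b), ← add_sum_erase _ _ (mem_univ b),
    subseqCountEndingIn_concat_self, hrest, subseqCount_eq_one_add_sum w,
    ← add_sum_erase _ _ (mem_univ b)]
  ring

end Subsequences

section UpperBound

variable {α : Type*} [DecidableEq α] [Fintype α]

/- The `k`-th largest last occurrence of a letter of `T` in `w` is at position at most `|w| - k`,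
and `E_a(w)` is at most `D` of the prefix before the last occurrence of `a`. -/
lemma sum_subseqCountEndingIn_le (T : Finset α) (w : List α) :
    ∑ a ∈ T, subseqCountEndingIn a w ≤
      ∑ k ∈ Finset.range (min #T w.length),
        qbonacciSum (Fintype.card α) (w.length - 1 - k) := by
  induction w using List.reverseRecOn generalizing T with
  | nil => simp [subseqCountEndingIn_nil]
  | append_singleton w b ih =>
    set q := Fintype.card α
    rw [List.length_append, List.length_singleton]
    set t := w.length
    have hD : subseqCount w ≤ qbonacciSum q t := by
      rw [subseqCount_eq_one_add_sum, qbonacciSum_eq_one_add_sum_min]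
      simpa using ih univ
    have hshift : ∀ m, ∑ k ∈ Finset.range m, qbonacciSum q (t + 1 - 1 - (k + 1))
        = ∑ k ∈ Finset.range m, qbonacciSum q (t - 1 - k) := fun m =>
      sum_congr rfl fun k _ => by congr 1; omega
    by_cases hb : b ∈ T
    · have hsplit : ∑ a ∈ T, subseqCountEndingIn a (w ++ [b])
          = subseqCount w + ∑ a ∈ T.erase b, subseqCountEndingIn a w := by
        rw [← add_sum_erase _ _ hb, subseqCountEndingIn_concat_self]
        exact congrArg _ (sum_congr rfl fun a ha =>
          subseqCountEndingIn_append_of_notMem (by simpa using ne_of_mem_erase ha) w)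
      have hT : min #T (t + 1) = min (#T - 1) t + 1 := by
        have := card_pos.2 ⟨b, hb⟩
        omega
      have := ih (T.erase b)
      rw [card_erase_of_mem hb] at this
      rw [hsplit, hT, Finset.sum_range_succ', hshift, Nat.sub_zero, Nat.add_sub_cancel]
      omega
    · calc ∑ a ∈ T, subseqCountEndingIn a (w ++ [b])
          = ∑ a ∈ T, subseqCountEndingIn a w :=
            sum_congr rfl fun a ha =>
              subseqCountEndingIn_append_of_notMem (by simpa using ne_of_mem_of_not_mem ha hb) w
        _ ≤ ∑ k ∈ Finset.range (min #T t), qbonacciSum q (t - 1 - k) := ih T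
        _ ≤ ∑ k ∈ Finset.range (min #T (t + 1)), qbonacciSum q (t + 1 - 1 - k) :=
            (Finset.sum_le_sum fun k _ => qbonacciSum_mono q (by omega)).trans
              (sum_le_sum_of_subset (Finset.range_subset_range.2 (by omega)))

lemma subseqCount_le_qbonacciSum (w : List α) :
    subseqCount w ≤ qbonacciSum (Fintype.card α) w.length := by
  rw [subseqCount_eq_one_add_sum, qbonacciSum_eq_one_add_sum_min]
  simpa using sum_subseqCountEndingIn_le univ w

end UpperBound

section LowerBound

variable {α : Type*} [DecidableEq α] [Fintype α]

def freshLetters (p : ℕ) (w : List α) : Finset α :=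
  univ \ (w.drop (w.length - (p - 1))).toFinset

/-- Words of length `t` in which each letter differs from the `p - 1` letters before it. -/
def spreadWords (α : Type*) [DecidableEq α] [Fintype α] (p : ℕ) : ℕ → Finset (List α)
  | 0 => {[]}
  | t + 1 => (spreadWords α p t).biUnion fun w => (freshLetters p w).image (w ++ [·])

lemma mem_spreadWords_succ {p t : ℕ} {w : List α} :
    w ∈ spreadWords α p (t + 1) ↔
      ∃ u ∈ spreadWords α p t, ∃ b ∈ freshLetters p u, u ++ [b] = w := by
  simp [spreadWords]

lemma length_of_mem_spreadWords {p t : ℕ} {w : List α} (h : w ∈ spreadWords α p t) :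
    w.length = t := by
  induction t generalizing w with
  | zero => simp_all [spreadWords]
  | succ t ih =>
    obtain ⟨u, hu, b, -, rfl⟩ := mem_spreadWords_succ.1 h
    simp [ih hu]

lemma le_card_freshLetters {p : ℕ} (hp : 1 ≤ p) (w : List α) :
    Fintype.card α + 1 - p ≤ #(freshLetters p w) := by
  have hrecent : #(w.drop (w.length - (p - 1))).toFinset ≤ p - 1 :=
    (List.toFinset_card_le _).trans (by simp; omega)
  have := le_card_sdiff (w.drop (w.length - (p - 1))).toFinset univ
  rw [card_univ] at this
  unfold freshLetters
  omega

lemma pow_le_card_spreadWords {p : ℕ} (hp : 1 ≤ p) (t : ℕ) :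
    (Fintype.card α + 1 - p) ^ t ≤ #(spreadWords α p t) := by
  induction t with
  | zero => simp [spreadWords]
  | succ t ih =>
    rw [spreadWords, card_biUnion, pow_succ]
    · calc (Fintype.card α + 1 - p) ^ t * (Fintype.card α + 1 - p)
          ≤ #(spreadWords α p t) * (Fintype.card α + 1 - p) := Nat.mul_le_mul_right _ ih
        _ ≤ ∑ w ∈ spreadWords α p t, #((freshLetters p w).image (w ++ [·])) := by
          rw [← smul_eq_mul]
          refine card_nsmul_le_sum _ _ _ fun w _ => ?_
          rw [card_image_of_injective _ fun b c h => by simpa using h]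
          exact le_card_freshLetters hp w
    · intro u _ v _ huv
      simp only [Function.onFun, Finset.disjoint_left, mem_image]
      rintro _ ⟨b, -, rfl⟩ ⟨c, -, h⟩
      exact huv (List.append_inj' h rfl).1.symm

lemma subseqCount_add_qbonacci_le_concat {p : ℕ} (hp : 1 ≤ p) {u : List α} {b : α}
    (hb : b ∈ freshLetters p u)
    (hu : ∀ k ≤ u.length, subseqCount (u.take (u.length - k)) +
      ∑ i ∈ Finset.range k, qbonacci p (u.length - i) ≤ subseqCount u) :
    subseqCount u + qbonacci p (u.length + 1) ≤ subseqCount (u ++ [b]) := by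
  have hrec := subseqCount_concat_add b u
  have hb' : b ∉ u.drop (u.length - (p - 1)) := by simpa [freshLetters] using hb
  rcases lt_or_ge u.length p with h | h
  · have hE : subseqCountEndingIn b u = 0 := by
      rw [Nat.sub_eq_zero_of_le (by omega), List.drop_zero] at hb'
      simpa [subseqCountEndingIn_nil] using subseqCountEndingIn_append_of_notMem hb' []
    have := hu u.length le_rfl
    rw [Nat.sub_self, List.take_zero, subseqCount_nil, ← qbonacciSum_eq_one_add_sum,
      qbonacciSum_of_le h.le, ← qbonacci_succ_of_le h] at this
    omega
  · have hE : subseqCountEndingIn b u ≤ subseqCount (u.take (u.length - p)) :=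
      subseqCountEndingIn_le_take (by omega)
        (by rwa [show u.length - p + 1 = u.length - (p - 1) by omega])
    have := hu p h
    rw [← qbonacci_succ_of_lt (by omega)] at this
    omega

lemma subseqCount_take_add_sum_le {p : ℕ} (hp : 1 ≤ p) {t : ℕ} {w : List α}
    (hw : w ∈ spreadWords α p t) {k : ℕ} (hk : k ≤ t) :
    subseqCount (w.take (t - k)) + ∑ i ∈ Finset.range k, qbonacci p (t - i) ≤
      subseqCount w := by
  induction t generalizing w k with
  | zero => simp_all [spreadWords]
  | succ t ih =>
    obtain ⟨u, hu, b, hb, rfl⟩ := mem_spreadWords_succ.1 hw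
    obtain rfl := length_of_mem_spreadWords hu
    cases k with
    | zero => simp [List.take_of_length_le]
    | succ k =>
      rw [Finset.sum_range_succ', show u.length + 1 - (k + 1) = u.length - k by omega,
        List.take_append_of_le_length (by omega)]
      simp only [Nat.add_sub_add_right, Nat.sub_zero]
      have := subseqCount_add_qbonacci_le_concat hp hb fun j hj => ih hu hj
      have := ih hu (k := k) (by omega)
      omega

lemma qbonacciSum_le_subseqCount {p t : ℕ} (hp : 1 ≤ p) {w : List α}
    (hw : w ∈ spreadWords α p t) :
    qbonacciSum p t ≤ subseqCount w := by
  simpa [qbonacciSum_eq_one_add_sum, subseqCount_nil] using subseqCount_take_add_sum_le hp hw le_rfl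

end LowerBound

section Tuples

variable {α : Type*} [DecidableEq α] [Fintype α]

def words (α : Type*) [DecidableEq α] [Fintype α] (t : ℕ) : Finset (List α) :=
  univ.image (List.ofFn : (Fin t → α) → List α)

lemma mem_words {t : ℕ} {w : List α} : w ∈ words α t ↔ w.length = t := by
  refine ⟨fun h => ?_, fun h => ?_⟩
  · obtain ⟨f, -, rfl⟩ := mem_image.1 h
    exact List.length_ofFn
  · subst h
    exact mem_image.2 ⟨fun i => w[i], mem_univ _, List.ofFn_getElem⟩

lemma card_words_le (t : ℕ) : #(words α t) ≤ Fintype.card α ^ t :=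
  card_image_le.trans (by simp)

lemma spreadWords_subset_words (p t : ℕ) : spreadWords α p t ⊆ words α t :=
  fun _ hw => mem_words.2 (length_of_mem_spreadWords hw)

lemma ncard_subseqTuples (t n : ℕ) :
    {P : List α × (Fin n → List α) | P.1.length = t ∧ ∀ j, P.2 j <+ P.1}.ncard
      = ∑ w ∈ words α t, subseqCount w ^ n := by
  have hset : {P : List α × (Fin n → List α) | P.1.length = t ∧ ∀ j, P.2 j <+ P.1}
      = ↑(((words α t).sigma fun w =>
            Fintype.piFinset fun (_ : Fin n) => w.sublists.toFinset).map
          (Equiv.sigmaEquivProd _ _).toEmbedding) := by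
    ext ⟨M, x⟩
    simp [mem_words]
  rw [hset, Set.ncard_coe_finset, card_map, card_sigma]
  simp [subseqCount]

end Tuples

theorem stmt14_general {α : Type*} [Fintype α] (p q t n : ℕ) (hp : 2 ≤ p)
    (hcard : Fintype.card α = q) :
    (q + 1 - p) ^ t * (∑ i ∈ Finset.range (t + 1), qbonacci p i) ^ n
        ≤ {P : List α × (Fin n → List α) |
            P.1.length = t ∧ ∀ j, P.2 j <+ P.1}.ncard ∧
    {P : List α × (Fin n → List α) | P.1.length = t ∧ ∀ j, P.2 j <+ P.1}.ncard
        ≤ q ^ t * (∑ i ∈ Finset.range (t + 1), qbonacci q i) ^ n := by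
  classical
  subst hcard
  rw [ncard_subseqTuples]
  constructor
  · calc (Fintype.card α + 1 - p) ^ t * qbonacciSum p t ^ n
        ≤ #(spreadWords α p t) * qbonacciSum p t ^ n := by
          gcongr
          exact pow_le_card_spreadWords (by omega) t
      _ ≤ ∑ w ∈ spreadWords α p t, subseqCount w ^ n := by
          rw [← smul_eq_mul]
          exact card_nsmul_le_sum _ _ _ fun w hw => by
            gcongr
            exact qbonacciSum_le_subseqCount (by omega) hw
      _ ≤ ∑ w ∈ words α t, subseqCount w ^ n :=
          sum_le_sum_of_subset (spreadWords_subset_words p t)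
  · calc ∑ w ∈ words α t, subseqCount w ^ n
        ≤ ∑ _w ∈ words α t, qbonacciSum (Fintype.card α) t ^ n := by
          refine Finset.sum_le_sum fun w hw => ?_
          gcongr
          simpa [mem_words.1 hw] using subseqCount_le_qbonacciSum w
      _ ≤ Fintype.card α ^ t * qbonacciSum (Fintype.card α) t ^ n := by
          rw [sum_const, smul_eq_mul]
          gcongr
          exact card_words_le t

theorem stmt14 {α : Type*} [Fintype α] (p q t n : ℕ) (hp : 2 ≤ p) (hpq : p ≤ q)
    (hn : 1 ≤ n) (hcard : Fintype.card α = q) :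
    (q + 1 - p) ^ t * (∑ i ∈ Finset.range (t + 1), qbonacci p i) ^ n
        ≤ {P : List α × (Fin n → List α) |
            P.1.length = t ∧ ∀ j, P.2 j <+ P.1}.ncard ∧
    {P : List α × (Fin n → List α) | P.1.length = t ∧ ∀ j, P.2 j <+ P.1}.ncard
        ≤ q ^ t * (∑ i ∈ Finset.range (t + 1), qbonacci q i) ^ n :=
  stmt14_general p q t n hp hcard
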